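/- Let A be a 2×2 integer matrix with det A = 1 and trace A > 2, with eigenvalues α > 1 > β = 1/α > 0, and let Γ_A = ℤ² ⋊_A ℤ with fully invariant subgroup H = ⟨a₁, a₂⟩ ≅ ℤ². Define θ: Γ_A → Γ_A by θ(a_i) = a^{A e_i} = τ a_i τ⁻¹ for i = 1, 2 and θ(τ) = τ. Then θ is an endomorphism, GR(θ) = 1, while the restriction θ' = θ|_H has GR(θ') = sp(A) = α > 1. In particular GR(θ) < max{GR(θ'), GR(θ̂)}, where θ̂ is the (identity) induced endomorphism of Γ_A/H ≅ ℤ. -/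

import Mathlib

open Filter Topology

/-- Word length of `g` with respect to the (symmetrized) generating set `S`. -/
noncomputable def wordLength {G : Type*} [Group G] (S : Set G) (g : G) : ℕ :=
  sInf {n : ℕ | ∃ w : List G, w.length = n ∧ (∀ x ∈ w, x ∈ S ∨ x⁻¹ ∈ S) ∧ w.prod = g}

/-- `L_k(f, S) = max_{s ∈ S} L(f^k(s), S)`. -/
noncomputable def Lk {G : Type*} [Group G] (S : Finset G) (f : G → G) (k : ℕ) : ℕ :=
  S.sup fun s => wordLength (S : Set G) (f^[k] s)

/-- The growth rate `GR(f) = inf_{k ≥ 1} L_k(f,S)^{1/k}` (which equals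
`lim_{k→∞} L_k(f,S)^{1/k}`). -/
noncomputable def GR {G : Type*} [Group G] (S : Finset G) (f : G → G) : ℝ :=
  ⨅ k : ℕ+, (Lk S f k : ℝ) ^ (((k : ℕ) : ℝ))⁻¹

/-- `f` is eventually trivial if some iterate is the trivial endomorphism. -/
def EventuallyTrivial {G : Type*} [Group G] (f : G → G) : Prop :=
  ∃ N : ℕ, 0 < N ∧ ∀ g, f^[N] g = 1

/-- The relations of the lattice `Γ_A = ℤ² ⋊_A ℤ =
⟨a₁, a₂, τ | [a₁,a₂] = 1, τ aᵢ τ⁻¹ = a₁^{ℓ_{1i}} a₂^{ℓ_{2i}}⟩` of `Sol`, where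
`a₁, a₂, τ` are the generators `0, 1, 2` and `A = (ℓ_{ij})`. -/
def solRels (A : Matrix (Fin 2) (Fin 2) ℤ) : Set (FreeGroup (Fin 3)) :=
  { FreeGroup.of 0 * FreeGroup.of 1 * (FreeGroup.of 0)⁻¹ * (FreeGroup.of 1)⁻¹,
    FreeGroup.of 2 * FreeGroup.of 0 * (FreeGroup.of 2)⁻¹ *
      (FreeGroup.of 0 ^ A 0 0 * FreeGroup.of 1 ^ A 1 0)⁻¹,
    FreeGroup.of 2 * FreeGroup.of 1 * (FreeGroup.of 2)⁻¹ *
      (FreeGroup.of 0 ^ A 0 1 * FreeGroup.of 1 ^ A 1 1)⁻¹ }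

/-- The lattice `Γ_A = ℤ² ⋊_A ℤ` of `Sol` determined by the integer matrix `A`. -/
abbrev SolLattice (A : Matrix (Fin 2) (Fin 2) ℤ) := PresentedGroup (solRels A)

/-- The generator `a₁` of `Γ_A`. -/
def solA1 (A : Matrix (Fin 2) (Fin 2) ℤ) : SolLattice A := PresentedGroup.of 0
/-- The generator `a₂` of `Γ_A`. -/
def solA2 (A : Matrix (Fin 2) (Fin 2) ℤ) : SolLattice A := PresentedGroup.of 1
/-- The generator `τ` of `Γ_A`. -/
def solTau (A : Matrix (Fin 2) (Fin 2) ℤ) : SolLattice A := PresentedGroup.of 2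

/-- The subgroup `H = ⟨a₁, a₂⟩ ≅ ℤ²` of `Γ_A`. -/
def solH (A : Matrix (Fin 2) (Fin 2) ℤ) : Subgroup (SolLattice A) :=
  Subgroup.closure {solA1 A, solA2 A}

/-!
`θ` is conjugation by `τ`, so `θᵏ(s) = τᵏ s τ⁻ᵏ` has word length at most `2k L(τ) + 1`, which
forces `GR(θ) = 1`. On `H` the map `θ` acts through `A`. For each root `λ` of the characteristic
polynomial of `A` there is a homomorphism `Γ_A → Aff(ℝ)` sending `τ` to `x ↦ λx` and `a₁, a₂` to
translations; its translation part on `H` is a character `ν_λ : H → ℝ` with `ν_λ ∘ θ = λ ν_λ`.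
As `|ν_α|` grows at most linearly in word length, `L_k(θ') ≥ αᵏ`. Conversely `ν_α` and `ν_{α⁻¹}`
together determine the exponents of `a₁ᵐ a₂ⁿ`, which bounds `L_k(θ')` by a multiple of `αᵏ`.
-/

section WordLength

variable {G : Type*} [Group G] {S : Set G}

theorem wordLength_le_length {g : G} (w : List G) (hw : ∀ x ∈ w, x ∈ S ∨ x⁻¹ ∈ S)
    (hg : w.prod = g) : wordLength S g ≤ w.length :=
  Nat.sInf_le ⟨w, rfl, hw, hg⟩

theorem exists_list_length_eq_wordLength (hS : Subgroup.closure S = ⊤) (g : G) :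
    ∃ w : List G, w.length = wordLength S g ∧ (∀ x ∈ w, x ∈ S ∨ x⁻¹ ∈ S) ∧ w.prod = g := by
  have hg : g ∈ Submonoid.closure (S ∪ S⁻¹) := by
    rw [← Subgroup.closure_toSubmonoid, hS]; trivial
  obtain ⟨w, hw, hwg⟩ := Submonoid.exists_list_of_mem_closure hg
  exact Nat.sInf_mem (s := {n | ∃ w : List G, w.length = n ∧ (∀ x ∈ w, x ∈ S ∨ x⁻¹ ∈ S) ∧
    w.prod = g}) ⟨_, w, rfl, hw, hwg⟩

theorem wordLength_one : wordLength S (1 : G) = 0 :=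
  Nat.le_zero.mp (wordLength_le_length [] (by simp) rfl)

theorem wordLength_le_one_of_mem {s : G} (hs : s ∈ S) : wordLength S s ≤ 1 :=
  wordLength_le_length [s] (by simp [hs]) (by simp)

theorem wordLength_pos (hS : Subgroup.closure S = ⊤) {g : G} (hg : g ≠ 1) :
    0 < wordLength S g := by
  obtain ⟨w, hlen, -, rfl⟩ := exists_list_length_eq_wordLength hS g
  rw [← hlen, List.length_pos_iff]
  rintro rfl
  exact hg List.prod_nil

theorem wordLength_mul_le (hS : Subgroup.closure S = ⊤) (g h : G) :
    wordLength S (g * h) ≤ wordLength S g + wordLength S h := by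
  obtain ⟨v, hvlen, hv, rfl⟩ := exists_list_length_eq_wordLength hS g
  obtain ⟨w, hwlen, hw, rfl⟩ := exists_list_length_eq_wordLength hS h
  rw [← hvlen, ← hwlen, ← List.length_append, ← List.prod_append]
  exact wordLength_le_length _ (fun x hx => (List.mem_append.mp hx).elim (hv x) (hw x)) rfl

theorem wordLength_inv_le (hS : Subgroup.closure S = ⊤) (g : G) :
    wordLength S g⁻¹ ≤ wordLength S g := by
  obtain ⟨w, hlen, hw, rfl⟩ := exists_list_length_eq_wordLength hS g
  rw [← hlen, List.prod_inv_reverse]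
  refine (wordLength_le_length _ ?_ rfl).trans_eq (by simp)
  simp only [List.mem_reverse, List.mem_map]
  rintro _ ⟨x, hx, rfl⟩
  simpa [or_comm] using hw x hx

theorem wordLength_pow_le (hS : Subgroup.closure S = ⊤) (g : G) (n : ℕ) :
    wordLength S (g ^ n) ≤ n * wordLength S g := by
  induction n with
  | zero => simp [wordLength_one]
  | succ n ih =>
    rw [pow_succ, add_one_mul]
    exact (wordLength_mul_le hS _ _).trans (by omega)

theorem wordLength_zpow_le (hS : Subgroup.closure S = ⊤) (g : G) (n : ℤ) :
    wordLength S (g ^ n) ≤ n.natAbs * wordLength S g := by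
  obtain ⟨n, rfl | rfl⟩ := Int.eq_nat_or_neg n
  · simpa using wordLength_pow_le hS g n
  · simpa using (wordLength_inv_le hS _).trans (wordLength_pow_le hS g n)

theorem abs_toAdd_le_wordLength_mul (hS : Subgroup.closure S = ⊤) (ν : G →* Multiplicative ℝ)
    {M : ℝ} (hM : ∀ s ∈ S, |(ν s).toAdd| ≤ M) (g : G) :
    |(ν g).toAdd| ≤ wordLength S g * M := by
  obtain ⟨w, hlen, hw, rfl⟩ := exists_list_length_eq_wordLength hS g
  rw [← hlen]
  clear hlen
  induction w with
  | nil => simp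
  | cons x w ih =>
    have hx : |(ν x).toAdd| ≤ M := by
      rcases hw x List.mem_cons_self with h | h
      · exact hM x h
      · simpa using hM _ h
    rw [List.prod_cons, map_mul, toAdd_mul, List.length_cons, Nat.cast_succ, add_one_mul]
    exact (abs_add_le _ _).trans
      (by linarith [ih fun y hy => hw y (List.mem_cons_of_mem x hy)])

theorem exists_mem_map_ne_one {H : Type*} [Group H] (hS : Subgroup.closure S = ⊤)
    {φ : G →* H} (hφ : φ ≠ 1) : ∃ s ∈ S, φ s ≠ 1 := by
  by_contra! h
  exact hφ (MonoidHom.eq_of_eqOn_dense hS h)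

end WordLength

section GrowthRate

variable {G : Type*} [Group G] {S : Finset G} {f : G → G}

theorem le_GR_of_pow_le_Lk {r : ℝ} (hr : 0 ≤ r) (h : ∀ k : ℕ+, r ^ (k : ℕ) ≤ Lk S f k) :
    r ≤ GR S f := by
  refine le_ciInf fun k => ?_
  have hk : ((k : ℕ) : ℝ) ≠ 0 := by exact_mod_cast k.ne_zero
  calc r = (r ^ (k : ℕ)) ^ ((k : ℕ) : ℝ)⁻¹ := by
        rw [← Real.rpow_natCast, ← Real.rpow_mul hr, mul_inv_cancel₀ hk, Real.rpow_one]
    _ ≤ (Lk S f k : ℝ) ^ ((k : ℕ) : ℝ)⁻¹ := by gcongr; exact h k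

theorem GR_le_of_Lk_le {r C : ℝ} (hr : 0 < r) (hC : 0 < C)
    (h : ∀ k : ℕ+, (Lk S f k : ℝ) ≤ C * k * r ^ (k : ℕ)) : GR S f ≤ r := by
  have hbdd : BddBelow (Set.range fun k : ℕ+ => (Lk S f k : ℝ) ^ ((k : ℕ) : ℝ)⁻¹) :=
    ⟨0, by rintro _ ⟨k, rfl⟩; positivity⟩
  have hle : ∀ k : ℕ+, GR S f ≤ C ^ ((k : ℕ) : ℝ)⁻¹ * ((k : ℕ) : ℝ) ^ ((k : ℕ) : ℝ)⁻¹ * r := by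
    intro k
    have hk : ((k : ℕ) : ℝ) ≠ 0 := by exact_mod_cast k.ne_zero
    calc GR S f ≤ (Lk S f k : ℝ) ^ ((k : ℕ) : ℝ)⁻¹ := ciInf_le hbdd k
      _ ≤ (C * k * r ^ (k : ℕ)) ^ ((k : ℕ) : ℝ)⁻¹ := by gcongr; exact h k
      _ = _ := by
        rw [Real.mul_rpow (by positivity) (by positivity),
          Real.mul_rpow hC.le (by positivity), ← Real.rpow_natCast r, ← Real.rpow_mul hr.le,
          mul_inv_cancel₀ hk, Real.rpow_one]
  have hlim : Tendsto (fun k : ℕ => C ^ (k : ℝ)⁻¹ * (k : ℝ) ^ (k : ℝ)⁻¹ * r) atTop (𝓝 r) := by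
    have hC1 : Tendsto (fun k : ℕ => C ^ (k : ℝ)⁻¹) atTop (𝓝 1) := by
      simpa using tendsto_const_nhds.rpow
        (tendsto_inv_atTop_zero.comp tendsto_natCast_atTop_atTop) (Or.inl hC.ne')
    have hk1 : Tendsto (fun k : ℕ => (k : ℝ) ^ (k : ℝ)⁻¹) atTop (𝓝 1) := by
      simpa [Function.comp_def, one_div] using
        tendsto_rpow_div.comp (tendsto_natCast_atTop_atTop (R := ℝ))
    simpa using (hC1.mul hk1).mul_const r
  refine ge_of_tendsto hlim ?_
  filter_upwards [eventually_ge_atTop 1] with k hk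
  exact hle ⟨k, hk⟩

theorem le_Lk_of_mem {s : G} (hs : s ∈ S) (k : ℕ) :
    wordLength (S : Set G) (f^[k] s) ≤ Lk S f k :=
  Finset.le_sup (f := fun s => wordLength (S : Set G) (f^[k] s)) hs

theorem one_le_GR_of_injective [Nontrivial G] (hS : Subgroup.closure (S : Set G) = ⊤)
    {φ : G →* G} (hφ : Function.Injective φ) : 1 ≤ GR S φ := by
  obtain ⟨s, hs, hs1⟩ := exists_mem_map_ne_one hS (φ := MonoidHom.id G) fun h =>
    (exists_ne (1 : G)).elim fun x hx => hx (DFunLike.congr_fun h x)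
  refine le_GR_of_pow_le_Lk zero_le_one fun k => ?_
  have hk : φ^[k] s ≠ 1 := fun h =>
    hs1 ((hφ.iterate k).eq_iff.mp (h.trans (iterate_map_one φ k).symm))
  rw [one_pow, Nat.one_le_cast]
  exact (wordLength_pos hS hk).trans_le (le_Lk_of_mem hs k)

theorem iterate_conj (g x : G) (k : ℕ) :
    (⇑(MulAut.conj g))^[k] x = g ^ k * x * (g ^ k)⁻¹ := by
  induction k with
  | zero => simp
  | succ k ih => rw [Function.iterate_succ_apply', ih, MulAut.conj_apply]; group

theorem GR_conj_le_one (hS : Subgroup.closure (S : Set G) = ⊤) (g : G) :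
    GR S (MulAut.conj g) ≤ 1 := by
  refine GR_le_of_Lk_le one_pos (C := 2 * wordLength (S : Set G) g + 1) (by positivity) fun k => ?_
  have hLk : Lk S (MulAut.conj g) k ≤ (2 * wordLength (S : Set G) g + 1) * k := by
    refine Finset.sup_le fun s hs => ?_
    have hpow := wordLength_pow_le hS g k
    have hinv := wordLength_inv_le hS (g ^ (k : ℕ))
    have hmul₁ := wordLength_mul_le hS (g ^ (k : ℕ) * s) (g ^ (k : ℕ))⁻¹
    have hmul₂ := wordLength_mul_le hS (g ^ (k : ℕ)) s
    have hs1 := wordLength_le_one_of_mem (S := (S : Set G)) (Finset.mem_coe.mpr hs)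
    have hk := k.pos
    rw [iterate_conj]
    nlinarith
  simpa using (Nat.cast_le (α := ℝ)).mpr hLk

theorem GR_conj_eq_one [Nontrivial G] (hS : Subgroup.closure (S : Set G) = ⊤) (g : G) :
    GR S (MulAut.conj g) = 1 :=
  (GR_conj_le_one hS g).antisymm
    (one_le_GR_of_injective hS (φ := (MulAut.conj g).toMonoidHom) (MulAut.conj g).injective)

theorem toAdd_iterate_of_eigen {ν : G →* Multiplicative ℝ} {r : ℝ}
    (hν : ∀ x, (ν (f x)).toAdd = r * (ν x).toAdd) (k : ℕ) (x : G) :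
    (ν (f^[k] x)).toAdd = r ^ k * (ν x).toAdd := by
  induction k with
  | zero => simp
  | succ k ih => rw [Function.iterate_succ_apply', hν, ih, pow_succ']; ring

theorem abs_le_GR_of_eigen (hS : Subgroup.closure (S : Set G) = ⊤) {ν : G →* Multiplicative ℝ}
    (hν1 : ν ≠ 1) {r : ℝ} (hν : ∀ x, (ν (f x)).toAdd = r * (ν x).toAdd) : |r| ≤ GR S f := by
  obtain ⟨s, hs, hs1⟩ := exists_mem_map_ne_one hS hν1
  obtain ⟨s₀, hs₀, hmax⟩ := S.exists_max_image (fun s => |(ν s).toAdd|) ⟨s, hs⟩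
  have hM : 0 < |(ν s₀).toAdd| :=
    (abs_pos.mpr (by simpa using hs1)).trans_le (hmax s hs)
  refine le_GR_of_pow_le_Lk (abs_nonneg r) fun k => ?_
  have h := abs_toAdd_le_wordLength_mul hS ν hmax (f^[k] s₀)
  rw [toAdd_iterate_of_eigen hν, abs_mul, abs_pow] at h
  calc |r| ^ (k : ℕ) ≤ wordLength (S : Set G) (f^[k] s₀) := le_of_mul_le_mul_right h hM
    _ ≤ Lk S f k := by exact_mod_cast le_Lk_of_mem hs₀ k

theorem GR_le_of_wordLength_le {ι : Type*} [Fintype ι] (ν : ι → G →* Multiplicative ℝ)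
    {c : ι → ℝ} {r : ℝ} (hr : 0 < r) (hcr : ∀ i, |c i| ≤ r)
    (hν : ∀ i x, (ν i (f x)).toAdd = c i * (ν i x).toAdd) {K : ℝ} (hK : 0 ≤ K)
    (hL : ∀ g, (wordLength (S : Set G) g : ℝ) ≤ K * ∑ i, |(ν i g).toAdd|) : GR S f ≤ r := by
  set M := ∑ i, ∑ s ∈ S, |(ν i s).toAdd|
  have hM : 0 ≤ M := by positivity
  refine GR_le_of_Lk_le hr (C := K * M + 1) (by positivity) fun k => ?_
  have hwl : ∀ s ∈ S, (wordLength (S : Set G) (f^[k] s) : ℝ) ≤ K * M * r ^ (k : ℕ) := by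
    intro s hs
    calc _ ≤ K * ∑ i, |(ν i (f^[k] s)).toAdd| := hL _
      _ ≤ K * ∑ i, r ^ (k : ℕ) * ∑ s ∈ S, |(ν i s).toAdd| := by
        gcongr with i
        rw [toAdd_iterate_of_eigen (hν i), abs_mul, abs_pow]
        exact mul_le_mul (pow_le_pow_left₀ (abs_nonneg _) (hcr i) k)
          (Finset.single_le_sum (f := fun s => |(ν i s).toAdd|) (fun _ _ => abs_nonneg _) hs)
          (abs_nonneg _) (by positivity)
      _ = K * M * r ^ (k : ℕ) := by rw [← Finset.mul_sum]; ring
  have hLk : Lk S f k ≤ ⌊K * M * r ^ (k : ℕ)⌋₊ :=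
    Finset.sup_le fun s hs => Nat.le_floor (hwl s hs)
  have hk : (1 : ℝ) ≤ k := by exact_mod_cast k.pos
  calc (Lk S f k : ℝ) ≤ K * M * r ^ (k : ℕ) :=
        (Nat.cast_le.mpr hLk).trans (Nat.floor_le (by positivity))
    _ ≤ (K * M + 1) * k * r ^ (k : ℕ) :=
        mul_le_mul_of_nonneg_right (by nlinarith [mul_nonneg hK hM]) (by positivity)

end GrowthRate

theorem exists_abs_add_abs_le {c p q : ℝ} (hc : c ≠ 0) (hpq : p ≠ q) :
    ∃ K, 0 ≤ K ∧ ∀ m n : ℝ, |m| + |n| ≤ K * (|m * c + n * p| + |m * c + n * q|) := by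
  have hD : 0 < |c| * |p - q| := by
    have := sub_ne_zero.mpr hpq
    positivity
  refine ⟨(|p| + |q| + |c|) / (|c| * |p - q|), by positivity, fun m n => ?_⟩
  set u := m * c + n * p
  set v := m * c + n * q
  have hm : |m| * (|c| * |p - q|) ≤ (|p| + |q|) * (|u| + |v|) := by
    calc |m| * (|c| * |p - q|) = |p * v - q * u| := by
          rw [← abs_mul, ← abs_mul]; congr 1; ring
      _ ≤ |p| * |v| + |q| * |u| := by
          rw [← abs_mul, ← abs_mul]; exact abs_sub _ _
      _ ≤ (|p| + |q|) * (|u| + |v|) := by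
          nlinarith [abs_nonneg p, abs_nonneg q, abs_nonneg u, abs_nonneg v]
  have hn : |n| * (|c| * |p - q|) ≤ |c| * (|u| + |v|) := by
    calc |n| * (|c| * |p - q|) = |c| * |u - v| := by
          rw [← abs_mul, ← abs_mul, ← abs_mul]; congr 1; ring
      _ ≤ |c| * (|u| + |v|) := by gcongr; exact abs_sub _ _
  rw [div_mul_eq_mul_div, le_div_iff₀ hD]
  linarith

def scaleAut : ℝˣ →* MulAut (Multiplicative ℝ) where
  toFun u :=
    { toFun x := .ofAdd (u * x.toAdd)
      invFun x := .ofAdd (u⁻¹.val * x.toAdd)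
      left_inv x := by simp
      right_inv x := by simp
      map_mul' x y := by simp [mul_add] }
  map_one' := by ext; simp
  map_mul' u v := by ext; simp [mul_assoc]

open SemidirectProduct in
theorem inr_mul_inl_mul_inv_inr (u : ℝˣ) (x : Multiplicative ℝ) :
    (inr u * inl x * (inr u)⁻¹ : Multiplicative ℝ ⋊[scaleAut] ℝˣ) = inl (.ofAdd (u * x.toAdd)) := by
  rw [← map_inv, ← inl_aut]; rfl

namespace SolLattice

variable (A : Matrix (Fin 2) (Fin 2) ℤ)

theorem solA1_conj_solA2 : solA1 A * solA2 A * (solA1 A)⁻¹ = solA2 A := by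
  have h := PresentedGroup.mk_eq_mk_of_mul_inv_mem (rels := solRels A) (Or.inl rfl)
  simp only [map_mul, map_inv] at h
  exact h

theorem commute_solA1_solA2 : Commute (solA1 A) (solA2 A) :=
  mul_inv_eq_iff_eq_mul.mp (solA1_conj_solA2 A)

theorem solA1_mem_solH : solA1 A ∈ solH A := Subgroup.subset_closure (by simp)

theorem solA2_mem_solH : solA2 A ∈ solH A := Subgroup.subset_closure (by simp)

theorem exists_eq_zpow_mul_zpow_of_mem_solH {g : SolLattice A} (hg : g ∈ solH A) :
    ∃ m n : ℤ, g = solA1 A ^ m * solA2 A ^ n := by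
  have hc := commute_solA1_solA2 A
  induction hg using Subgroup.closure_induction with
  | mem x hx =>
    rcases hx with rfl | rfl
    exacts [⟨1, 0, by simp⟩, ⟨0, 1, by simp⟩]
  | one => exact ⟨0, 0, by simp⟩
  | mul x y _ _ ihx ihy =>
    obtain ⟨m, n, rfl⟩ := ihx
    obtain ⟨m', n', rfl⟩ := ihy
    refine ⟨m + m', n + n', ?_⟩
    rw [zpow_add, zpow_add, (hc.zpow_zpow m' n).mul_mul_mul_comm]
  | inv x _ ihx =>
    obtain ⟨m, n, rfl⟩ := ihx
    exact ⟨-m, -n, by rw [mul_inv_rev, zpow_neg, zpow_neg, (hc.zpow_zpow m n).inv_inv.eq]⟩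

theorem eq_conj_solTau {θ : SolLattice A →* SolLattice A}
    (h1 : θ (solA1 A) = solTau A * solA1 A * (solTau A)⁻¹)
    (h2 : θ (solA2 A) = solTau A * solA2 A * (solTau A)⁻¹) (h3 : θ (solTau A) = solTau A) :
    θ = (MulAut.conj (solTau A)).toMonoidHom :=
  PresentedGroup.ext fun i => by
    fin_cases i
    exacts [h1, h2, h3.trans (mul_inv_cancel_right _ _).symm]

section Affine

open SemidirectProduct

variable {A} {l : ℝˣ} (hl : (l : ℝ) ^ 2 - A.trace * l + A.det = 0)

/-- The action of `Γ_A` on the line in which `τ` scales by `λ` and `a₁, a₂` translate by the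
entries of the left `λ`-eigenvector `(ℓ₂₁, λ - ℓ₁₁)` of `A`. -/
def solToAffine : SolLattice A →* Multiplicative ℝ ⋊[scaleAut] ℝˣ :=
  PresentedGroup.toGroup
    (f := ![inl (.ofAdd (A 1 0 : ℝ)), inl (.ofAdd (l - A 0 0 : ℝ)), inr l]) <| by
    rw [Matrix.trace_fin_two, Matrix.det_fin_two] at hl
    rintro r (rfl | rfl | rfl) <;>
      simp only [map_mul, map_inv, map_zpow, FreeGroup.lift_apply_of, mul_inv_eq_one,
        Matrix.cons_val_zero, Matrix.cons_val_one, Matrix.cons_val_two, Matrix.head_cons,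
        Matrix.tail_cons]
    · rw [← map_inv, ← map_mul, ← map_mul, mul_inv_cancel_comm]
    all_goals
      rw [inr_mul_inl_mul_inv_inr, ← map_zpow inl, ← map_zpow inl, ← map_mul inl]
      congr 1
      apply Multiplicative.toAdd.injective
      simp only [toAdd_ofAdd, toAdd_mul, toAdd_zpow, zsmul_eq_mul]
    · ring
    · push_cast at hl; linear_combination hl

theorem solToAffine_solA1 : solToAffine hl (solA1 A) = inl (.ofAdd (A 1 0 : ℝ)) :=
  PresentedGroup.toGroup.of _

theorem solToAffine_solA2 : solToAffine hl (solA2 A) = inl (.ofAdd (l - A 0 0 : ℝ)) :=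
  PresentedGroup.toGroup.of _

theorem solToAffine_solTau : solToAffine hl (solTau A) = inr l :=
  PresentedGroup.toGroup.of _

theorem right_solToAffine_of_mem {g : SolLattice A} (hg : g ∈ solH A) :
    (solToAffine hl g).right = 1 := by
  suffices solH A ≤ (rightHom.comp (solToAffine hl)).ker from this hg
  rw [solH, Subgroup.closure_le]
  rintro _ (rfl | rfl) <;>
    simp only [SetLike.mem_coe, MonoidHom.mem_ker, MonoidHom.comp_apply, solToAffine_solA1,
      solToAffine_solA2, rightHom_eq_right, right_inl]

def solEigenchar : solH A →* Multiplicative ℝ where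
  toFun h := (solToAffine hl h).left
  map_one' := by simp
  map_mul' g h := by
    rw [Subgroup.coe_mul, map_mul, mul_left, right_solToAffine_of_mem hl g.2, map_one,
      MulAut.one_apply]

theorem toAdd_solEigenchar_of_eq_conj {h h' : solH A}
    (hh' : (h' : SolLattice A) = solTau A * h * (solTau A)⁻¹) :
    (solEigenchar hl h').toAdd = l * (solEigenchar hl h).toAdd := by
  have hinl : solToAffine hl h = inl (solToAffine hl h).left := by
    simpa [right_solToAffine_of_mem hl h.2] using (inl_left_mul_inr_right (solToAffine hl h)).symm
  change (solToAffine hl h').left.toAdd = _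
  rw [hh', map_mul, map_mul, map_inv, solToAffine_solTau, hinl, inr_mul_inl_mul_inv_inr]
  rfl

theorem toAdd_solEigenchar_of_eq_zpow_mul_zpow {h : solH A} {m n : ℤ}
    (hmn : (h : SolLattice A) = solA1 A ^ m * solA2 A ^ n) :
    (solEigenchar hl h).toAdd = m * (A 1 0 : ℝ) + n * (l - A 0 0 : ℝ) := by
  change (solToAffine hl h).left.toAdd = _
  rw [hmn, map_mul, map_zpow, map_zpow, solToAffine_solA1, solToAffine_solA2, ← map_zpow inl,
    ← map_zpow inl, ← map_mul inl, left_inl]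
  simp [zsmul_eq_mul]

end Affine

variable {A}

theorem solTau_ne_one {l : ℝˣ} (hl : (l : ℝ) ^ 2 - A.trace * l + A.det = 0) (hl1 : l ≠ 1) :
    solTau A ≠ 1 := fun h =>
  hl1 (by simpa [solToAffine_solTau hl] using congrArg (fun g => (solToAffine hl g).right) h)

theorem exists_wordLength_le_solEigenchar {S' : Set (solH A)}
    (hS' : Subgroup.closure S' = ⊤) (hc : A 1 0 ≠ 0) {l l' : ℝˣ}
    (hl : (l : ℝ) ^ 2 - A.trace * l + A.det = 0) (hl' : (l' : ℝ) ^ 2 - A.trace * l' + A.det = 0)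
    (hll' : l ≠ l') :
    ∃ K, 0 ≤ K ∧ ∀ h : solH A, (wordLength S' h : ℝ) ≤
      K * (|(solEigenchar hl h).toAdd| + |(solEigenchar hl' h).toAdd|) := by
  obtain ⟨K, hK, hmn⟩ := exists_abs_add_abs_le (Int.cast_ne_zero.mpr hc)
    (sub_left_injective.ne (Units.val_injective.ne hll') : (l - A 0 0 : ℝ) ≠ l' - A 0 0)
  set a₁ : solH A := ⟨solA1 A, solA1_mem_solH A⟩
  set a₂ : solH A := ⟨solA2 A, solA2_mem_solH A⟩
  set L : ℝ := wordLength S' a₁ + wordLength S' a₂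
  refine ⟨L * K, by positivity, fun h => ?_⟩
  obtain ⟨m, n, hh⟩ := exists_eq_zpow_mul_zpow_of_mem_solH A h.2
  have hh' : h = a₁ ^ m * a₂ ^ n := Subtype.ext hh
  have hwl : wordLength S' h ≤ m.natAbs * wordLength S' a₁ + n.natAbs * wordLength S' a₂ := by
    rw [hh']
    exact (wordLength_mul_le hS' _ _).trans
      (add_le_add (wordLength_zpow_le hS' _ _) (wordLength_zpow_le hS' _ _))
  rw [toAdd_solEigenchar_of_eq_zpow_mul_zpow hl hh, toAdd_solEigenchar_of_eq_zpow_mul_zpow hl' hh]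
  calc (wordLength S' h : ℝ) ≤ |(m : ℝ)| * wordLength S' a₁ + |(n : ℝ)| * wordLength S' a₂ := by
        simpa [Nat.cast_natAbs] using (Nat.cast_le (α := ℝ)).mpr hwl
    _ ≤ L * (|(m : ℝ)| + |(n : ℝ)|) := by
        simp only [L]; nlinarith [abs_nonneg (m : ℝ), abs_nonneg (n : ℝ),
          (wordLength S' a₁).cast_nonneg (α := ℝ), (wordLength S' a₂).cast_nonneg (α := ℝ)]
    _ ≤ L * K * _ := by rw [mul_assoc]; gcongr; exact hmn m n

theorem GR_solH_eq {u : ℝˣ} (hu1 : 1 < (u : ℝ)) (hu : (u : ℝ) ^ 2 - A.trace * u + A.det = 0)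
    (hu' : ((u⁻¹ : ℝˣ) : ℝ) ^ 2 - A.trace * (u⁻¹ : ℝˣ) + A.det = 0) (hc : A 1 0 ≠ 0)
    {f' : solH A → solH A} (hf' : ∀ x, (f' x : SolLattice A) = solTau A * x * (solTau A)⁻¹)
    {S' : Finset (solH A)} (hS' : Subgroup.closure (S' : Set (solH A)) = ⊤) :
    GR S' f' = u := by
  have heigen {l : ℝˣ} (hl : (l : ℝ) ^ 2 - A.trace * l + A.det = 0) (x : solH A) :
      (solEigenchar hl (f' x)).toAdd = l * (solEigenchar hl x).toAdd :=
    toAdd_solEigenchar_of_eq_conj hl (hf' x)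
  have hν1 : solEigenchar hu ≠ 1 := fun h => hc <| by
    have := toAdd_solEigenchar_of_eq_zpow_mul_zpow (h := ⟨solA1 A, solA1_mem_solH A⟩) hu
      (m := 1) (n := 0) (by simp)
    simp only [h, MonoidHom.one_apply, toAdd_one, Int.cast_one, one_mul, Int.cast_zero,
      zero_mul, add_zero] at this
    exact_mod_cast this.symm
  have hu0 : (0 : ℝ) < u := one_pos.trans hu1
  have hu'1 : ((u⁻¹ : ℝˣ) : ℝ) < 1 := by
    rw [Units.val_inv_eq_inv_val]; exact inv_lt_one_of_one_lt₀ hu1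
  obtain ⟨K, hK, hL⟩ := exists_wordLength_le_solEigenchar hS' hc hu hu'
    (fun h => (hu'1.trans hu1).ne' (congrArg Units.val h))
  refine le_antisymm ?_ ?_
  · refine GR_le_of_wordLength_le ![solEigenchar hu, solEigenchar hu'] (c := ![u, (u⁻¹ : ℝˣ)])
      hu0 ?_ ?_ hK (by simpa using hL)
    · simp only [Fin.forall_fin_two, Matrix.cons_val_zero, Matrix.cons_val_one]
      refine ⟨(abs_of_pos hu0).le, abs_le.mpr ⟨?_, (hu'1.trans hu1).le⟩⟩
      rw [Units.val_inv_eq_inv_val]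
      linarith [inv_pos.mpr hu0]
    · simp only [Fin.forall_fin_two, Matrix.cons_val_zero, Matrix.cons_val_one]
      exact ⟨heigen hu, heigen hu'⟩
  · simpa [abs_of_pos hu0] using abs_le_GR_of_eigen hS' hν1 (heigen hu)

end SolLattice

theorem Matrix.one_zero_ne_zero_of_det_eq_one_of_two_lt_trace {A : Matrix (Fin 2) (Fin 2) ℤ}
    (hdet : A.det = 1) (htr : 2 < A.trace) : A 1 0 ≠ 0 := by
  intro h
  rw [Matrix.det_fin_two, h, mul_zero, sub_zero] at hdet
  rw [Matrix.trace_fin_two] at htr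
  rcases Int.eq_one_or_neg_one_of_mul_eq_one' hdet with ⟨h₀, h₁⟩ | ⟨h₀, h₁⟩ <;> omega

theorem Matrix.sq_sub_trace_mul_add_det_eq_zero {A : Matrix (Fin 2) (Fin 2) ℤ} (hdet : A.det = 1)
    {x : ℝ} (hx : x ≠ 0) (h : x + x⁻¹ = A.trace) : x ^ 2 - A.trace * x + A.det = 0 := by
  rw [hdet, ← h]
  field_simp
  ring

/-- For a lattice `Γ_A` of `Sol`, the assignment `θ(aᵢ) = τ aᵢ τ⁻¹`,
`θ(τ) = τ` defines an endomorphism `θ` of `Γ_A`, with `GR(θ) = 1` while the restriction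
`θ'` to `H = ⟨a₁,a₂⟩` has `GR(θ') = sp(A) = α > 1`; in particular
`GR(θ) < max{GR(θ'), GR(θ̂)}`, where `θ̂` is the induced endomorphism of `Γ_A/H ≅ ℤ`. -/
theorem GR_solLattice_counterexample (A : Matrix (Fin 2) (Fin 2) ℤ)
    (hdet : A.det = 1) (htr : 2 < A.trace)
    (α : ℝ) (hα1 : 1 < α) (hαA : α + α⁻¹ = (A.trace : ℝ))
    (hHN : (solH A).Normal) :
    (∃ θ : SolLattice A →* SolLattice A,
      θ (solA1 A) = solTau A * solA1 A * (solTau A)⁻¹ ∧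
      θ (solA2 A) = solTau A * solA2 A * (solTau A)⁻¹ ∧
      θ (solTau A) = solTau A) ∧
    (∀ θ : SolLattice A →* SolLattice A,
      θ (solA1 A) = solTau A * solA1 A * (solTau A)⁻¹ →
      θ (solA2 A) = solTau A * solA2 A * (solTau A)⁻¹ →
      θ (solTau A) = solTau A →
      (∀ g ∈ solH A, θ g ∈ solH A) ∧
      (∀ S : Finset (SolLattice A), Subgroup.closure (S : Set (SolLattice A)) = ⊤ →
        GR S ⇑θ = 1 ∧
        (∀ f' : solH A → solH A, (∀ x : solH A, (f' x : SolLattice A) = θ x) →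
          ∀ S' : Finset (solH A), Subgroup.closure (S' : Set (solH A)) = ⊤ →
            GR S' f' = α ∧
            (∀ ψ : SolLattice A ⧸ solH A →* SolLattice A ⧸ solH A,
              (∀ g : SolLattice A, ψ (QuotientGroup.mk g) = QuotientGroup.mk (θ g)) →
              ∀ T : Finset (SolLattice A ⧸ solH A),
                Subgroup.closure (T : Set (SolLattice A ⧸ solH A)) = ⊤ →
                GR S ⇑θ < max (GR S' f') (GR T ⇑ψ))))) := by
  set u : ℝˣ := Units.mk0 α (by positivity)
  have hu : (u : ℝ) ^ 2 - A.trace * u + A.det = 0 :=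
    Matrix.sq_sub_trace_mul_add_det_eq_zero hdet u.ne_zero hαA
  have hu' : ((u⁻¹ : ℝˣ) : ℝ) ^ 2 - A.trace * (u⁻¹ : ℝˣ) + A.det = 0 :=
    Matrix.sq_sub_trace_mul_add_det_eq_zero hdet u⁻¹.ne_zero (by simpa [u, add_comm] using hαA)
  have : Nontrivial (SolLattice A) :=
    ⟨_, _, SolLattice.solTau_ne_one hu fun h => hα1.ne' (congrArg Units.val h)⟩
  refine ⟨⟨(MulAut.conj (solTau A)).toMonoidHom, rfl, rfl, mul_inv_cancel_right _ _⟩,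
    fun θ h1 h2 h3 => ?_⟩
  obtain rfl := SolLattice.eq_conj_solTau A h1 h2 h3
  refine ⟨fun g hg => hHN.conj_mem g hg (solTau A), fun S hS => ?_⟩
  have hGR : GR S (MulAut.conj (solTau A)).toMonoidHom = 1 := GR_conj_eq_one hS _
  refine ⟨hGR, fun f' hf' S' hS' => ?_⟩
  have hGR' : GR S' f' = α := SolLattice.GR_solH_eq hα1 hu hu'
    (Matrix.one_zero_ne_zero_of_det_eq_one_of_two_lt_trace hdet htr) hf' hS'
  refine ⟨hGR', fun ψ _ T _ => ?_⟩
  rw [hGR, hGR']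
  exact lt_max_of_lt_left hα1
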